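/- Let d ≥ 2, r > 0, 0 ≤ ε_tr < r/2, and let D = {(x_i, y_i)}_{i=1}^n ⊂ ℝ^d × {−1, +1} satisfy (x_i)_1 = y_i·r/2, with induced dataset D̃ (first coordinate removed) linearly separable with normalized max-ℓ2-margin solution θ̃ and margin γ̃ > 0. Then the ε_tr-robust max-ℓ2-margin solution of D with respect to the signal-directed perturbation sets S_{ε_tr} is θ̂^{ε_tr} = (1/√((r − 2ε_tr)² + 4γ̃²)) · (r − 2ε_tr, 2γ̃·θ̃). -/

import Mathlib

open MeasureTheory ProbabilityTheory Real Set
open scoped ENNReal BigOperators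

noncomputable section

/-- Euclidean dot product on `Fin d → ℝ`. -/
def dot {d : ℕ} (u v : Fin d → ℝ) : ℝ := ∑ j, u j * v j

/-- Euclidean (`ℓ2`) norm on `Fin d → ℝ`. -/
def norm2 {d : ℕ} (u : Fin d → ℝ) : ℝ := Real.sqrt (∑ j, (u j) ^ 2)

/-- The (minimum) margin of the linear classifier `θ` on the dataset `{(x i, y i)}`. -/
def margin {d n : ℕ} (x : Fin n → Fin d → ℝ) (y : Fin n → ℝ) (θ : Fin d → ℝ) : ℝ :=
  ⨅ i, y i * dot θ (x i)

/-- The worst-case (robust) margin of `θ` on the dataset, with respect to the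
signal-directed perturbation sets `S_ε(x) = {x + β • e₁ : |β| ≤ ε}`. -/
def robustMargin {m n : ℕ} (ε : ℝ) (x : Fin n → Fin (m + 1) → ℝ) (y : Fin n → ℝ)
    (θ : Fin (m + 1) → ℝ) : ℝ :=
  ⨅ i, ⨅ β : {b : ℝ // |b| ≤ ε}, y i * dot θ (x i + β.1 • (Pi.single 0 1 : Fin (m + 1) → ℝ))


/-!
Since `x i 0 = y i * r / 2` and `|y i| = 1`, the worst perturbation of sample `i` shifts its first
coordinate by `ε` against `θ 0`, so the robust margin of `θ = (a, u)` splits as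
`a r / 2 - ε |a| + margin(u)` on the induced dataset. Homogeneity of the margin bounds the second
term by `‖u‖ γ̃`, so the objective is at most `|a| (r/2 - ε) + ‖u‖ γ̃ ≤ √((r/2 - ε)² + γ̃²)` by
Cauchy–Schwarz in `ℝ²`, with equality at the claimed direction. Equality in all three steps forces
`a ≥ 0`, `(a, ‖u‖) ∥ (r/2 - ε, γ̃)` and `u ∥ θ̃`; the last uses that a positively homogeneous
superadditive function has a unique maximizer on the unit sphere of a strictly convex space.
-/

lemma ciInf_add_mul_of_abs_le {ε : ℝ} (hε : 0 ≤ ε) (A c : ℝ) :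
    ⨅ β : {b : ℝ // |b| ≤ ε}, (A + β.1 * c) = A - ε * |c| := by
  have lower : ∀ β : {b : ℝ // |b| ≤ ε}, A - ε * |c| ≤ A + β.1 * c := fun β => by
    have h₁ := mul_le_mul_of_nonneg_right β.2 (abs_nonneg c)
    have h₂ := neg_abs_le (β.1 * c)
    rw [abs_mul] at h₂
    linarith
  obtain ⟨β₀, hβ₀⟩ : ∃ β₀ : {b : ℝ // |b| ≤ ε}, A + β₀.1 * c = A - ε * |c| := by
    rcases le_total 0 c with hc | hc
    · exact ⟨⟨-ε, by simp [abs_of_nonneg hε]⟩, by rw [abs_of_nonneg hc]; ring⟩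
    · exact ⟨⟨ε, by simp [abs_of_nonneg hε]⟩, by rw [abs_of_nonpos hc]; ring⟩
  exact IsLeast.csInf_eq ⟨⟨β₀, hβ₀⟩, Set.forall_mem_range.2 lower⟩

lemma ciInf_const_add {ι : Type*} [Finite ι] [Nonempty ι] (a : ℝ) (f : ι → ℝ) :
    ⨅ i, (a + f i) = a + ⨅ i, f i :=
  ((OrderIso.addLeft a).map_ciInf (Finite.bddBelow_range f)).symm

lemma norm2_eq_norm {d : ℕ} (u : Fin d → ℝ) : norm2 u = ‖WithLp.toLp 2 u‖ := by
  simp [norm2, EuclideanSpace.norm_eq]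

lemma sq_norm2_eq_sq_add_sq_norm2_tail {m : ℕ} (θ : Fin (m + 1) → ℝ) :
    norm2 θ ^ 2 = θ 0 ^ 2 + norm2 (Fin.tail θ) ^ 2 := by
  rw [norm2, norm2, Real.sq_sqrt (by positivity), Real.sq_sqrt (by positivity), Fin.sum_univ_succ]
  rfl

lemma norm2_smul {d : ℕ} (c : ℝ) (u : Fin d → ℝ) : norm2 (c • u) = |c| * norm2 u := by
  simp [norm2_eq_norm, norm_smul]

lemma sq_add_sq_le_one_of_norm2_le_one {m : ℕ} {θ : Fin (m + 1) → ℝ} (hθ : norm2 θ ≤ 1) :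
    |θ 0| ^ 2 + norm2 (Fin.tail θ) ^ 2 ≤ 1 := by
  rw [sq_abs, ← sq_norm2_eq_sq_add_sq_norm2_tail]
  exact pow_le_one₀ (Real.sqrt_nonneg _) hθ

lemma dot_eq_mul_add_dot_tail {m : ℕ} (u v : Fin (m + 1) → ℝ) :
    dot u v = u 0 * v 0 + dot (Fin.tail u) (Fin.tail v) := by
  simp [dot, Fin.sum_univ_succ, Fin.tail]

section PositivelyHomogeneous

variable {E : Type*} [NormedAddCommGroup E] [NormedSpace ℝ E] {f : E → ℝ} {γ : ℝ}

theorem le_norm_mul_of_forall_norm_le_one (hf : ∀ c : ℝ, 0 ≤ c → ∀ u, f (c • u) = c * f u)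
    (hγ : ∀ u, ‖u‖ ≤ 1 → f u ≤ γ) (u : E) : f u ≤ ‖u‖ * γ := by
  rcases eq_or_ne u 0 with rfl | hu
  · have h₀ : f 0 = 0 := by simpa using hf 0 le_rfl 0
    simp [h₀]
  have hpos : 0 < ‖u‖ := norm_pos_iff.2 hu
  have h := hγ (‖u‖⁻¹ • u) (by rw [norm_smul, norm_inv, norm_norm, inv_mul_cancel₀ hpos.ne'])
  rw [hf _ (inv_nonneg.2 hpos.le)] at h
  calc f u = ‖u‖ * (‖u‖⁻¹ * f u) := by field_simp
    _ ≤ ‖u‖ * γ := by gcongr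

theorem eq_norm_smul_of_eq_norm_mul [StrictConvexSpace ℝ E]
    (hf : ∀ c : ℝ, 0 ≤ c → ∀ u, f (c • u) = c * f u) (hf_add : ∀ u v, f u + f v ≤ f (u + v))
    (hγ : ∀ u, ‖u‖ ≤ 1 → f u ≤ γ) (hγ_pos : 0 < γ) {θ : E} (hθ : ‖θ‖ = 1) (hfθ : f θ = γ)
    {u : E} (hu : f u = ‖u‖ * γ) : u = ‖u‖ • θ := by
  rcases eq_or_ne u 0 with rfl | hu₀
  · simp
  have hpos : 0 < ‖u‖ := norm_pos_iff.2 hu₀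
  set v := ‖u‖⁻¹ • u with hv_def
  have hv : ‖v‖ = 1 := by rw [norm_smul, norm_inv, norm_norm, inv_mul_cancel₀ hpos.ne']
  have hfv : f v = γ := by rw [hf _ (inv_nonneg.2 hpos.le), hu]; field_simp
  have hvθ : v = θ := by
    by_contra hne
    have hlt : ‖v + θ‖ < 2 := by
      have h := not_sameRay_iff_norm_add_lt.1 fun h => hne (h.eq_of_norm_eq (hv.trans hθ.symm))
      rwa [hv, hθ, one_add_one_eq_two] at h
    have h₁ := le_norm_mul_of_forall_norm_le_one hf hγ (v + θ)
    have h₂ := hf_add v θ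
    nlinarith
  rw [← hvθ, hv_def, smul_inv_smul₀ hpos.ne']

end PositivelyHomogeneous

section Margin

variable {d n : ℕ} (x : Fin n → Fin d → ℝ) (y : Fin n → ℝ)

lemma margin_smul {c : ℝ} (hc : 0 ≤ c)
    (θ : Fin d → ℝ) : margin x y (c • θ) = c * margin x y θ := by
  simp only [margin, Real.mul_iInf_of_nonneg hc]
  congr 1 with i
  change y i * (c • θ) ⬝ᵥ x i = c * (y i * θ ⬝ᵥ x i)
  rw [smul_dotProduct, smul_eq_mul]
  ring

lemma margin_add_le [NeZero n] (u v : Fin d → ℝ) :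
    margin x y u + margin x y v ≤ margin x y (u + v) :=
  le_ciInf fun i => by
    have hu := ciInf_le (Finite.bddBelow_range fun i => y i * dot u (x i)) i
    have hv := ciInf_le (Finite.bddBelow_range fun i => y i * dot v (x i)) i
    change _ ≤ y i * (u + v) ⬝ᵥ x i
    rw [add_dotProduct, mul_add]
    exact add_le_add hu hv

variable {x y} {θt : Fin d → ℝ} {γ : ℝ}

lemma margin_le_norm2_mul (hmax : ∀ θ, norm2 θ ≤ 1 → margin x y θ ≤ γ) (u : Fin d → ℝ) :
    margin x y u ≤ norm2 u * γ := by
  simpa [norm2_eq_norm] using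
    le_norm_mul_of_forall_norm_le_one (f := fun w : EuclideanSpace ℝ (Fin d) => margin x y w.ofLp)
      (fun c hc w => margin_smul x y hc w.ofLp)
      (fun w hw => hmax w.ofLp (by simpa [norm2_eq_norm] using hw)) (WithLp.toLp 2 u)

lemma eq_norm2_smul_of_margin_eq [NeZero n] (hmax : ∀ θ, norm2 θ ≤ 1 → margin x y θ ≤ γ)
    (hγ : 0 < γ) (hθt : norm2 θt = 1) (hθt_margin : margin x y θt = γ) {u : Fin d → ℝ}
    (hu : margin x y u = norm2 u * γ) : u = norm2 u • θt := by
  have h := eq_norm_smul_of_eq_norm_mul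
    (f := fun w : EuclideanSpace ℝ (Fin d) => margin x y w.ofLp)
    (fun c hc w => margin_smul x y hc w.ofLp) (fun v w => margin_add_le x y v.ofLp w.ofLp)
    (fun w hw => hmax w.ofLp (by simpa [norm2_eq_norm] using hw)) hγ
    (θ := WithLp.toLp 2 θt) (by rwa [← norm2_eq_norm]) hθt_margin
    (u := WithLp.toLp 2 u) (by rwa [← norm2_eq_norm])
  simpa [← norm2_eq_norm] using congrArg WithLp.ofLp h

end Margin

lemma mul_add_mul_le_sqrt {a b p q : ℝ} (hab : a ^ 2 + b ^ 2 ≤ 1) :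
    a * p + b * q ≤ √(p ^ 2 + q ^ 2) :=
  (le_abs_self _).trans <| Real.abs_le_sqrt <| by
    nlinarith [sq_nonneg (a * q - b * p), sq_nonneg p, sq_nonneg q]

lemma eq_div_sqrt_of_sqrt_le {a b p q : ℝ} (hab : a ^ 2 + b ^ 2 ≤ 1) (hpq : 0 < p ^ 2 + q ^ 2)
    (h : √(p ^ 2 + q ^ 2) ≤ a * p + b * q) :
    a = p / √(p ^ 2 + q ^ 2) ∧ b = q / √(p ^ 2 + q ^ 2) := by
  set M := √(p ^ 2 + q ^ 2)
  have hM : 0 < M := Real.sqrt_pos.2 hpq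
  have hM2 : M ^ 2 = p ^ 2 + q ^ 2 := Real.sq_sqrt hpq.le
  -- `(a M - p)² + (b M - q)² = M² (a² + b²) - 2 M (a p + b q) + M² ≤ 0`
  have hsum : (a * M - p) ^ 2 + (b * M - q) ^ 2 ≤ 0 := by nlinarith
  have ha : a * M - p = 0 := by nlinarith [sq_nonneg (a * M - p), sq_nonneg (b * M - q)]
  have hb : b * M - q = 0 := by nlinarith [sq_nonneg (a * M - p), sq_nonneg (b * M - q)]
  constructor <;> field_simp <;> linarith

section SignalDirection

variable {m : ℕ} {g : (Fin m → ℝ) → ℝ} {θt : Fin m → ℝ} {s ε γ : ℝ}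

/-- The robust margin of a dataset with `x i 0 = y i * s`, written through the margin `g` of the
induced dataset. -/
def robustObjective (s ε : ℝ) (g : (Fin m → ℝ) → ℝ) (θ : Fin (m + 1) → ℝ) : ℝ :=
  θ 0 * s - ε * |θ 0| + g (Fin.tail θ)

lemma robustMargin_eq {n : ℕ} [NeZero n] (hε : 0 ≤ ε) {x : Fin n → Fin (m + 1) → ℝ}
    {y : Fin n → ℝ} (hy : ∀ i, |y i| = 1) (hx : ∀ i, x i 0 = y i * s) (θ : Fin (m + 1) → ℝ) :
    robustMargin ε x y θ = robustObjective s ε (margin (fun i => Fin.tail (x i)) y) θ := by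
  have hsample : ∀ i (β : ℝ), y i * dot θ (x i + β • (Pi.single 0 1 : Fin (m + 1) → ℝ))
      = (θ 0 * s + y i * dot (Fin.tail θ) (Fin.tail (x i))) + β * (y i * θ 0) := fun i β => by
    have hyy : y i * y i = 1 := by rw [← abs_mul_abs_self, hy i, one_mul]
    change y i * θ ⬝ᵥ (x i + β • Pi.single 0 1) = _
    rw [dotProduct_add, dotProduct_smul, dotProduct_single]
    change y i * (dot θ (x i) + β • (θ 0 * 1)) = _
    rw [dot_eq_mul_add_dot_tail, hx i, smul_eq_mul]
    linear_combination θ 0 * s * hyy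
  simp only [robustMargin, robustObjective, hsample, ciInf_add_mul_of_abs_le hε, abs_mul, hy,
    one_mul, margin]
  rw [← ciInf_const_add]
  congr 1 with i
  ring

def robustMaxMarginDirection (s ε γ : ℝ) (θt : Fin m → ℝ) : Fin (m + 1) → ℝ :=
  Fin.cons ((s - ε) / √((s - ε) ^ 2 + γ ^ 2)) ((γ / √((s - ε) ^ 2 + γ ^ 2)) • θt)

lemma norm2_robustMaxMarginDirection (hθt : norm2 θt = 1) (hγ : 0 < γ) :
    norm2 (robustMaxMarginDirection s ε γ θt) = 1 := by
  have hpos : 0 < (s - ε) ^ 2 + γ ^ 2 := by positivity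
  have hsq : norm2 (robustMaxMarginDirection s ε γ θt) ^ 2 = 1 := by
    rw [sq_norm2_eq_sq_add_sq_norm2_tail, robustMaxMarginDirection, Fin.cons_zero,
      Fin.tail_cons, norm2_smul, hθt, div_pow, abs_div, abs_of_pos hγ,
      abs_of_pos (Real.sqrt_pos.2 hpos), mul_one, div_pow, Real.sq_sqrt hpos.le, ← add_div,
      div_self hpos.ne']
  exact (pow_eq_one_iff_of_nonneg (Real.sqrt_nonneg _) two_ne_zero).1 hsq

lemma robustObjective_robustMaxMarginDirection
    (hg_smul : ∀ c : ℝ, 0 ≤ c → ∀ u, g (c • u) = c * g u) (hgθt : g θt = γ) (hsε : 0 ≤ s - ε)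
    (hγ : 0 < γ) :
    robustObjective s ε g (robustMaxMarginDirection s ε γ θt) = √((s - ε) ^ 2 + γ ^ 2) := by
  have hpos : 0 < (s - ε) ^ 2 + γ ^ 2 := by positivity
  have hM : 0 < √((s - ε) ^ 2 + γ ^ 2) := Real.sqrt_pos.2 hpos
  rw [robustObjective, robustMaxMarginDirection, Fin.cons_zero, Fin.tail_cons,
    hg_smul _ (by positivity), hgθt, abs_of_nonneg (by positivity)]
  field_simp
  linear_combination (Real.sq_sqrt hpos.le).symm

lemma robustObjective_le_sqrt (hg : ∀ u, g u ≤ norm2 u * γ) (hs : 0 ≤ s)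
    {θ : Fin (m + 1) → ℝ} (hθ : norm2 θ ≤ 1) :
    robustObjective s ε g θ ≤ √((s - ε) ^ 2 + γ ^ 2) :=
  calc robustObjective s ε g θ ≤ |θ 0| * (s - ε) + norm2 (Fin.tail θ) * γ := by
        rw [robustObjective]
        linarith [mul_le_mul_of_nonneg_right (le_abs_self (θ 0)) hs, hg (Fin.tail θ)]
    _ ≤ √((s - ε) ^ 2 + γ ^ 2) := mul_add_mul_le_sqrt (sq_add_sq_le_one_of_norm2_le_one hθ)

lemma eq_robustMaxMarginDirection_of_sqrt_le (hg : ∀ u, g u ≤ norm2 u * γ)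
    (hg_eq : ∀ u, g u = norm2 u * γ → u = norm2 u • θt) (hs : 0 < s) (hγ : 0 < γ)
    {θ : Fin (m + 1) → ℝ} (hθ : norm2 θ ≤ 1)
    (h : √((s - ε) ^ 2 + γ ^ 2) ≤ robustObjective s ε g θ) :
    θ = robustMaxMarginDirection s ε γ θt := by
  have hab := sq_add_sq_le_one_of_norm2_le_one hθ
  have habs := mul_le_mul_of_nonneg_right (le_abs_self (θ 0)) hs.le
  have hCS := mul_add_mul_le_sqrt (p := s - ε) (q := γ) hab
  have hgθ := hg (Fin.tail θ)
  rw [robustObjective] at h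
  obtain ⟨ha, hb⟩ := eq_div_sqrt_of_sqrt_le (p := s - ε) (q := γ) hab (by positivity) (by linarith)
  have h0 : θ 0 = |θ 0| := mul_right_cancel₀ hs.ne' (by linarith)
  have htail := hg_eq (Fin.tail θ) (by linarith)
  rw [← Fin.cons_self_tail θ, htail, h0, ha, hb]
  rfl

end SignalDirection

lemma inv_sqrt_smul_cons_eq_robustMaxMarginDirection {m : ℕ} (r ε γ : ℝ) (θt : Fin m → ℝ) :
    (√((r - 2 * ε) ^ 2 + 4 * γ ^ 2))⁻¹ • (Fin.cons (r - 2 * ε) ((2 * γ) • θt) : Fin (m + 1) → ℝ)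
      = robustMaxMarginDirection (r / 2) ε γ θt := by
  have hsqrt : √((r - 2 * ε) ^ 2 + 4 * γ ^ 2) = 2 * √((r / 2 - ε) ^ 2 + γ ^ 2) := by
    rw [show (r - 2 * ε) ^ 2 + 4 * γ ^ 2 = 2 ^ 2 * ((r / 2 - ε) ^ 2 + γ ^ 2) by ring,
      Real.sqrt_mul (by norm_num), Real.sqrt_sq (by norm_num)]
  ext i
  refine Fin.cases ?_ (fun j => ?_) i
  · simp [robustMaxMarginDirection, hsqrt]
    field_simp
  · simp [robustMaxMarginDirection, hsqrt]
    field_simp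

theorem robust_max_margin_closed_form_general
    {m n : ℕ} (hn : 0 < n) (r εtr : ℝ) (hr : 0 < r)
    (hεtr : 0 ≤ εtr) (hεtr2 : εtr < r / 2)
    (x : Fin n → Fin (m + 1) → ℝ) (y : Fin n → ℝ)
    (hy : ∀ i, y i = 1 ∨ y i = -1)
    (hx1 : ∀ i, x i 0 = y i * (r / 2))
    (θt : Fin m → ℝ) (γt : ℝ)
    (hθt_norm : norm2 θt = 1)
    (hγt : γt = margin (fun i => Fin.tail (x i)) y θt)
    (hγt_pos : 0 < γt)
    (hθt_max : ∀ θ : Fin m → ℝ, norm2 θ ≤ 1 →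
      margin (fun i => Fin.tail (x i)) y θ ≤ γt) :
    ∀ θhat : Fin (m + 1) → ℝ,
      θhat = (Real.sqrt ((r - 2 * εtr) ^ 2 + 4 * γt ^ 2))⁻¹ •
        (Fin.cons (r - 2 * εtr) ((2 * γt) • θt) : Fin (m + 1) → ℝ) →
      norm2 θhat = 1 ∧
      (∀ θ : Fin (m + 1) → ℝ, norm2 θ ≤ 1 →
        robustMargin εtr x y θ ≤ robustMargin εtr x y θhat) ∧
      (∀ θ : Fin (m + 1) → ℝ, norm2 θ = 1 →
        (∀ θ' : Fin (m + 1) → ℝ, norm2 θ' ≤ 1 →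
          robustMargin εtr x y θ' ≤ robustMargin εtr x y θ) →
        θ = θhat) := by
  intro θhat hθhat
  rw [inv_sqrt_smul_cons_eq_robustMaxMarginDirection] at hθhat
  subst hθhat
  have : NeZero n := ⟨hn.ne'⟩
  have hy_abs : ∀ i, |y i| = 1 := fun i => by rcases hy i with h | h <;> simp [h]
  have hdecomp := robustMargin_eq hεtr hy_abs hx1
  have hnorm := norm2_robustMaxMarginDirection (s := r / 2) (ε := εtr) hθt_norm hγt_pos
  have hval : robustMargin εtr x y (robustMaxMarginDirection (r / 2) εtr γt θt)
      = √((r / 2 - εtr) ^ 2 + γt ^ 2) := by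
    rw [hdecomp]
    exact robustObjective_robustMaxMarginDirection (fun c hc => margin_smul _ y hc) hγt.symm
      (by linarith) hγt_pos
  refine ⟨hnorm, fun θ hθ => ?_, fun θ hθ hmax => ?_⟩
  · rw [hval, hdecomp]
    exact robustObjective_le_sqrt (margin_le_norm2_mul hθt_max) (half_pos hr).le hθ
  · refine eq_robustMaxMarginDirection_of_sqrt_le (margin_le_norm2_mul hθt_max)
      (fun u => eq_norm2_smul_of_margin_eq hθt_max hγt_pos hθt_norm hγt.symm) (half_pos hr)
      hγt_pos hθ.le ?_
    rw [← hdecomp, ← hval]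
    exact hmax _ hnorm.le

/-- Under the hypotheses of Statement 0 and for `0 ≤ ε_tr < r/2`, the
`ε_tr`-robust max-`ℓ2`-margin solution of the dataset with respect to the signal-directed
perturbation sets is `θ̂^{ε_tr} = (1/√((r − 2ε_tr)² + 4γ̃²)) • (r − 2ε_tr, 2γ̃ θ̃)`: it has unit
norm, maximizes the robust margin over the unit ball, and is the unique unit-norm maximizer. -/
theorem robust_max_margin_closed_form
    {m n : ℕ} (hm : 1 ≤ m) (hn : 0 < n) (r εtr : ℝ) (hr : 0 < r)
    (hεtr : 0 ≤ εtr) (hεtr2 : εtr < r / 2)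
    (x : Fin n → Fin (m + 1) → ℝ) (y : Fin n → ℝ)
    (hy : ∀ i, y i = 1 ∨ y i = -1)
    (hx1 : ∀ i, x i 0 = y i * (r / 2))
    (θt : Fin m → ℝ) (γt : ℝ)
    (hθt_norm : norm2 θt = 1)
    (hγt : γt = margin (fun i => Fin.tail (x i)) y θt)
    (hγt_pos : 0 < γt)
    (hθt_max : ∀ θ : Fin m → ℝ, norm2 θ ≤ 1 →
      margin (fun i => Fin.tail (x i)) y θ ≤ γt) :
    ∀ θhat : Fin (m + 1) → ℝ,
      θhat = (Real.sqrt ((r - 2 * εtr) ^ 2 + 4 * γt ^ 2))⁻¹ •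
        (Fin.cons (r - 2 * εtr) ((2 * γt) • θt) : Fin (m + 1) → ℝ) →
      norm2 θhat = 1 ∧
      (∀ θ : Fin (m + 1) → ℝ, norm2 θ ≤ 1 →
        robustMargin εtr x y θ ≤ robustMargin εtr x y θhat) ∧
      (∀ θ : Fin (m + 1) → ℝ, norm2 θ = 1 →
        (∀ θ' : Fin (m + 1) → ℝ, norm2 θ' ≤ 1 →
          robustMargin εtr x y θ' ≤ robustMargin εtr x y θ) →
        θ = θhat) :=
  robust_max_margin_closed_form_general hn r εtr hr hεtr hεtr2 x y hy hx1 θt γt hθt_norm hγt hγt_pos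
    hθt_max

end
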